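/- If the curve C is Lipschitz continuous with constant L on [ξ₁, ξ₂] (with ξ₁ < ξ₂), then the TRT mapping Φ is Lipschitz continuous on the reference triangle minus the origin, with a Lipschitz constant depending only on L, |ξ₂ − ξ₁|, ‖x₃‖, and sup‖C‖. -/

import Mathlib

/-!
Writing `t = s + r` and `w = s ξ₁ + r ξ₂`, which depend linearly on `(s, r)`, the map is
`Φ = x₃ + t • g (w / t)` with `g = C - x₃`, i.e. a translate of the perspective of `g` composed with
a linear map. The perspective of a bounded Lipschitz function on a bounded set is Lipschitz on its
cone `{t > 0, w / t ∈ S}`: for `u = w / t` and `u' = w' / t'` one has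
`t (u - u') = (w - w') - (t - t') u'`, so the factor `t` in front of `g u - g u'` absorbs the
blow-up of `w / t` near the apex.
-/

open Set NNReal

theorem Convex.inv_add_smul_add_smul_mem {E : Type*} [AddCommGroup E] [Module ℝ E] {s : Set E}
    (hs : Convex ℝ s) {x y : E} (hx : x ∈ s) (hy : y ∈ s) {a b : ℝ} (ha : 0 ≤ a) (hb : 0 ≤ b)
    (hab : 0 < a + b) : (a + b)⁻¹ • (a • x + b • y) ∈ s := by
  convert convex_iff_div.1 hs hx hy ha hb hab using 1
  simp only [smul_add, smul_smul, div_eq_inv_mul]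

theorem IsCompact.exists_nnreal_bound_of_continuousOn {α E : Type*} [TopologicalSpace α]
    [SeminormedAddCommGroup E] {s : Set α} (hs : IsCompact s) {f : α → E}
    (hf : ContinuousOn f s) : ∃ B : ℝ≥0, ∀ x ∈ s, ‖f x‖ ≤ B :=
  let ⟨B, hB⟩ := hs.exists_bound_of_continuousOn hf
  ⟨B.toNNReal, fun x hx => (hB x hx).trans (Real.le_coe_toNNReal B)⟩

theorem LipschitzOnWith.congr {α β : Type*} [PseudoEMetricSpace α] [PseudoEMetricSpace β]
    {K : ℝ≥0} {f g : α → β} {s : Set α} (hf : LipschitzOnWith K f s) (hfg : EqOn f g s) :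
    LipschitzOnWith K g s := fun x hx y hy => by
  rw [← hfg hx, ← hfg hy]; exact hf hx hy

section Perspective

variable {E F : Type*} [NormedAddCommGroup E] [NormedSpace ℝ E]
  [NormedAddCommGroup F] [NormedSpace ℝ F]

theorem abs_mul_norm_inv_smul_sub_inv_smul_le {t t' : ℝ} (ht : t ≠ 0) (ht' : t' ≠ 0) (w w' : F) :
    |t| * ‖t⁻¹ • w - t'⁻¹ • w'‖ ≤ ‖w - w'‖ + |t - t'| * ‖t'⁻¹ • w'‖ := by
  have key : t • (t⁻¹ • w - t'⁻¹ • w') = (w - w') - (t - t') • (t'⁻¹ • w') := by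
    rw [smul_sub, smul_inv_smul₀ ht, sub_smul, smul_inv_smul₀ ht']
    abel
  calc |t| * ‖t⁻¹ • w - t'⁻¹ • w'‖ = ‖(w - w') - (t - t') • (t'⁻¹ • w')‖ := by
        rw [← key, norm_smul, Real.norm_eq_abs]
    _ ≤ ‖w - w'‖ + |t - t'| * ‖t'⁻¹ • w'‖ := by
        rw [← Real.norm_eq_abs, ← norm_smul]; exact norm_sub_le _ _

theorem LipschitzOnWith.perspective {g : F → E} {S : Set F} {L B R : ℝ≥0}
    (hg : LipschitzOnWith L g S) (hgB : ∀ x ∈ S, ‖g x‖ ≤ B) (hSR : ∀ x ∈ S, ‖x‖ ≤ R) :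
    LipschitzOnWith (B + L * R + L) (fun q : ℝ × F => q.1 • g (q.1⁻¹ • q.2))
      {q | 0 < q.1 ∧ q.1⁻¹ • q.2 ∈ S} := by
  refine LipschitzOnWith.of_dist_le_mul ?_
  rintro ⟨t, w⟩ ⟨ht, hu⟩ ⟨t', w'⟩ ⟨ht', hu'⟩
  dsimp only at ht hu ht' hu' ⊢
  set u := t⁻¹ • w
  set u' := t'⁻¹ • w'
  set D := dist (t, w) (t', w')
  have hDt : |t - t'| ≤ D := by
    rw [← Real.dist_eq]; exact le_max_left _ _
  have hDw : ‖w - w'‖ ≤ D := by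
    rw [← dist_eq_norm]; exact le_max_right _ _
  have hgu : ‖g u - g u'‖ ≤ L * ‖u - u'‖ := by
    rw [← dist_eq_norm, ← dist_eq_norm]; exact hg.dist_le_mul u hu u' hu'
  have htu : t * ‖u - u'‖ ≤ ‖w - w'‖ + |t - t'| * R := by
    have := abs_mul_norm_inv_smul_sub_inv_smul_le ht.ne' ht'.ne' w w'
    rw [abs_of_pos ht] at this
    exact this.trans (by gcongr; exact hSR u' hu')
  calc dist (t • g u) (t' • g u') = ‖(t - t') • g u' + t • (g u - g u')‖ := by
        rw [dist_eq_norm]; congr 1; module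
    _ ≤ |t - t'| * B + t * (L * ‖u - u'‖) := by
        refine (norm_add_le _ _).trans ?_
        rw [norm_smul, norm_smul, Real.norm_eq_abs, Real.norm_eq_abs, abs_of_pos ht]
        gcongr
        exact hgB u' hu'
    _ ≤ |t - t'| * B + L * (‖w - w'‖ + |t - t'| * R) := by
        rw [mul_left_comm]; gcongr
    _ ≤ D * B + L * (D + D * R) := by gcongr
    _ = (B + L * R + L) * D := by ring

end Perspective

/-- If the curve `C` is Lipschitz on `[ξ₁, ξ₂]`, then the TRT mapping is
Lipschitz on the reference triangle minus the origin. -/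
theorem trt_lipschitz
    (ξ₁ ξ₂ : ℝ) (hξ : ξ₁ < ξ₂)
    (C : ℝ → EuclideanSpace ℝ (Fin 2)) (L : NNReal)
    (hC : LipschitzOnWith L C (Set.Icc ξ₁ ξ₂))
    (x₃ : EuclideanSpace ℝ (Fin 2))
    (Φ : ℝ × ℝ → EuclideanSpace ℝ (Fin 2))
    (hΦ : ∀ s r : ℝ, s + r ≠ 0 →
      Φ (s, r) = (1 - s - r) • x₃ + (s + r) • C ((s * ξ₁ + r * ξ₂) / (s + r))) :
    ∃ K : NNReal, LipschitzOnWith K Φ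
      {p : ℝ × ℝ | 0 ≤ p.1 ∧ 0 ≤ p.2 ∧ p.1 + p.2 ≤ 1 ∧ 0 < p.1 + p.2} := by
  set T := {p : ℝ × ℝ | 0 ≤ p.1 ∧ 0 ≤ p.2 ∧ p.1 + p.2 ≤ 1 ∧ 0 < p.1 + p.2}
  have hg : LipschitzOnWith (L + 0) (fun u => C u - x₃) (Icc ξ₁ ξ₂) :=
    hC.sub (LipschitzWith.const x₃).lipschitzOnWith
  obtain ⟨B, hB⟩ := isCompact_Icc.exists_nnreal_bound_of_continuousOn hg.continuousOn
  obtain ⟨R, hR⟩ :=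
    isCompact_Icc.exists_nnreal_bound_of_continuousOn (continuousOn_id' (Icc ξ₁ ξ₂))
  open ContinuousLinearMap in
  let A : ℝ × ℝ →L[ℝ] ℝ × ℝ := (fst ℝ ℝ ℝ + snd ℝ ℝ ℝ).prod (ξ₁ • fst ℝ ℝ ℝ + ξ₂ • snd ℝ ℝ ℝ)
  have hA : MapsTo A T {q | 0 < q.1 ∧ q.1⁻¹ • q.2 ∈ Icc ξ₁ ξ₂} := by
    rintro ⟨s, r⟩ ⟨hs, hr, -, hsr⟩
    refine ⟨hsr, ?_⟩
    simpa [A, mul_comm] using (convex_Icc ξ₁ ξ₂).inv_add_smul_add_smul_mem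
      (left_mem_Icc.2 hξ.le) (right_mem_Icc.2 hξ.le) hs hr hsr
  have hΦ_eq : EqOn (fun p => x₃ + (A p).1 • (C ((A p).1⁻¹ • (A p).2) - x₃)) Φ T := by
    rintro ⟨s, r⟩ ⟨-, -, -, hsr⟩
    rw [hΦ s r hsr.ne']
    simp only [A, ContinuousLinearMap.prod_apply, add_apply, smul_apply,
      ContinuousLinearMap.coe_fst', ContinuousLinearMap.coe_snd', smul_eq_mul, inv_mul_eq_div,
      mul_comm ξ₁, mul_comm ξ₂]
    module
  exact ⟨_, ((LipschitzWith.const x₃).lipschitzOnWith.add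
    ((hg.perspective hB hR).comp A.lipschitz.lipschitzOnWith hA)).congr hΦ_eq⟩
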